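/- arXiv:1812.04323 — 5 statements merged into one kernel-verified Lean document; each statement's English description precedes it below -/
import Mathlib

section
/- Let n ≥ 1, let A, B, F, G be n×n real matrices with F−G and F+G invertible, and set M₋ = (F−G)⁻¹(A−B), M₊ = (F+G)⁻¹(A+B), E = M₋M₊. Define X(t) = Σ_{k=0}^∞ E^k t^{2k}/(2k)! − M₊ · Σ_{k=0}^∞ E^k t^{2k+1}/(2k+1)!. Then X is differentiable on ℝ, X(0) = I, and for every t ∈ ℝ it satisfies the differential equation with reflection F·X′(t) + G·X′(−t) + A·X(t) + B·X(−t) = 0. -/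
/-!
Put `C t = ∑ t^(2k)/(2k)! • E^k` and `S t = ∑ t^(2k+1)/(2k+1)! • E^k`. Termwise differentiation
gives `S' = C` and `C' = E S`; `C` is even and `S` is odd. Hence `X = C - M₊ S` has
`X' = E S - M₊ C`, and the left side of the reflection equation collapses to
`((F - G) E - (A - B) M₊) S t + ((A + B) - (F + G) M₊) C t`, whose coefficients vanish by the
definitions of `E` and `M₊`. Termwise differentiation is justified by `‖E^k‖ ≤ ‖1‖ (n ‖E‖)^k`
for the entrywise sup norm, which dominates the series by exponential series.
-/

open Matrix
open scoped Nat

attribute [local instance] Matrix.normedAddCommGroup Matrix.normedSpace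

theorem Matrix.norm_mul_le_card_mul {l m n α : Type*} [Fintype l] [Fintype m] [Fintype n]
    [NormedRing α] (A : Matrix l m α) (B : Matrix m n α) :
    ‖A * B‖ ≤ Fintype.card m * ‖A‖ * ‖B‖ := by
  rw [Matrix.norm_le_iff (by positivity)]
  intro i j
  calc ‖(A * B) i j‖ ≤ ∑ k, ‖A i k * B k j‖ := by rw [Matrix.mul_apply]; exact norm_sum_le _ _
    _ ≤ ∑ _k : m, ‖A‖ * ‖B‖ := Finset.sum_le_sum fun k _ =>
        (norm_mul_le _ _).trans (mul_le_mul (norm_entry_le_entrywise_sup_norm A)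
          (norm_entry_le_entrywise_sup_norm B) (norm_nonneg _) (norm_nonneg _))
    _ = Fintype.card m * ‖A‖ * ‖B‖ := by simp [mul_assoc]

theorem Matrix.norm_pow_le_card_mul {m α : Type*} [Fintype m] [DecidableEq m] [NormedRing α]
    (E : Matrix m m α) (k : ℕ) :
    ‖E ^ k‖ ≤ ‖(1 : Matrix m m α)‖ * (Fintype.card m * ‖E‖) ^ k := by
  induction k with
  | zero => simp
  | succ k ih =>
    calc ‖E ^ (k + 1)‖ ≤ Fintype.card m * ‖E ^ k‖ * ‖E‖ := by
          rw [pow_succ]; exact Matrix.norm_mul_le_card_mul _ _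
      _ ≤ Fintype.card m * (‖(1 : Matrix m m α)‖ * (Fintype.card m * ‖E‖) ^ k) * ‖E‖ := by
          gcongr
      _ = ‖(1 : Matrix m m α)‖ * (Fintype.card m * ‖E‖) ^ (k + 1) := by ring

theorem summable_pow_two_mul_add_div_factorial_mul_pow (r c : ℝ) (m : ℕ) :
    Summable fun k : ℕ => r ^ (2 * k + m) / (2 * k + m)! * c ^ k := by
  refine .of_norm_bounded ((Real.summable_pow_div_factorial (r ^ 2 * |c|)).mul_left (|r| ^ m))
    fun k => ?_
  have hfac : (k ! : ℝ) ≤ (2 * k + m)! := by exact_mod_cast Nat.factorial_le (by omega)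
  calc ‖r ^ (2 * k + m) / (2 * k + m)! * c ^ k‖
        = |r| ^ m * (r ^ 2 * |c|) ^ k / (2 * k + m)! := by
        rw [Real.norm_eq_abs, abs_mul, abs_div, abs_pow, abs_pow, Nat.abs_cast, mul_pow,
          pow_add, pow_mul, sq_abs]
        ring
    _ ≤ |r| ^ m * ((r ^ 2 * |c|) ^ k / k !) := by
        rw [← mul_div_assoc]
        exact div_le_div_of_nonneg_left (by positivity) (by positivity) hfac

theorem norm_pow_div_factorial_smul_le {V : Type*} [NormedAddCommGroup V] [NormedSpace ℝ V]
    {y ρ B : ℝ} (hy : |y| ≤ ρ) (j : ℕ) {v : V} (hv : ‖v‖ ≤ B) :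
    ‖(y ^ j / j ! : ℝ) • v‖ ≤ ρ ^ j / j ! * B := by
  rw [norm_smul, Real.norm_eq_abs, abs_div, abs_pow, Nat.abs_cast]
  have hρ : 0 ≤ ρ := (abs_nonneg y).trans hy
  exact mul_le_mul (by gcongr) hv (norm_nonneg v) (by positivity)

theorem hasDerivAt_pow_succ_div_factorial (j : ℕ) (t : ℝ) :
    HasDerivAt (fun t : ℝ => t ^ (j + 1) / (j + 1)!) (t ^ j / j !) t := by
  refine ((hasDerivAt_pow (j + 1) t).div_const _).congr_deriv ?_
  rw [Nat.factorial_succ]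
  push_cast
  field_simp

/-- For `a k = E ^ k` this is `cosh (t √E)` when `m = 0` and `sinh (t √E) / √E` when `m = 1`. -/
noncomputable def lacunaryExpSeries {V : Type*} [NormedAddCommGroup V] [NormedSpace ℝ V]
    (m : ℕ) (a : ℕ → V) (t : ℝ) : V :=
  ∑' k : ℕ, (t ^ (2 * k + m) / (2 * k + m)! : ℝ) • a k

section lacunaryExpSeries

variable {V : Type*} [NormedAddCommGroup V] [NormedSpace ℝ V] {a : ℕ → V} {K c : ℝ}

theorem lacunaryExpSeries_neg (m : ℕ) (a : ℕ → V) (t : ℝ) :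
    lacunaryExpSeries m a (-t) = (-1 : ℝ) ^ m • lacunaryExpSeries m a t := by
  rw [lacunaryExpSeries, lacunaryExpSeries, ← tsum_const_smul'']
  congr 1 with k
  rw [smul_smul, neg_pow t, pow_add (-1 : ℝ), pow_mul, neg_one_sq, one_pow, one_mul, mul_div_assoc]

theorem lacunaryExpSeries_zero_apply_zero (a : ℕ → V) : lacunaryExpSeries 0 a 0 = a 0 := by
  rw [lacunaryExpSeries, tsum_eq_single 0 fun k hk => by simp [hk]]
  simp

theorem lacunaryExpSeries_succ_apply_zero (m : ℕ) (a : ℕ → V) :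
    lacunaryExpSeries (m + 1) a 0 = 0 := by
  simp [lacunaryExpSeries]

variable [CompleteSpace V]

theorem summable_lacunaryExpSeries (ha : ∀ k, ‖a k‖ ≤ K * c ^ k) (m : ℕ) (t : ℝ) :
    Summable fun k : ℕ => (t ^ (2 * k + m) / (2 * k + m)! : ℝ) • a k :=
  .of_norm_bounded (((summable_pow_two_mul_add_div_factorial_mul_pow |t| c m).mul_left K).congr
    fun k => by ring) fun k => norm_pow_div_factorial_smul_le le_rfl _ (ha k)

theorem hasDerivAt_lacunaryExpSeries_succ (ha : ∀ k, ‖a k‖ ≤ K * c ^ k) (m : ℕ) (t : ℝ) :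
    HasDerivAt (lacunaryExpSeries (m + 1) a) (lacunaryExpSeries m a t) t := by
  have ht : t ∈ Metric.ball (0 : ℝ) (|t| + 1) := by simp
  exact hasDerivAt_tsum_of_isPreconnected
    (u := fun k => (|t| + 1) ^ (2 * k + m) / (2 * k + m)! * (K * c ^ k))
    (((summable_pow_two_mul_add_div_factorial_mul_pow (|t| + 1) c m).mul_left K).congr
      fun k => by ring)
    Metric.isOpen_ball (convex_ball _ _).isPreconnected
    (fun k y _ => (hasDerivAt_pow_succ_div_factorial (2 * k + m) y).smul_const (a k))
    (fun k y hy => norm_pow_div_factorial_smul_le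
      (by simpa using (mem_ball_zero_iff.mp hy).le) _ (ha k))
    ht (summable_lacunaryExpSeries ha (m + 1) t) ht

theorem lacunaryExpSeries_zero_eq_add (ha : ∀ k, ‖a k‖ ≤ K * c ^ k) :
    lacunaryExpSeries 0 a = fun t => a 0 + lacunaryExpSeries 2 (fun k => a (k + 1)) t := by
  ext t
  rw [lacunaryExpSeries, (summable_lacunaryExpSeries ha 0 t).tsum_eq_zero_add]
  simp [lacunaryExpSeries, mul_add]

theorem hasDerivAt_lacunaryExpSeries_zero (ha : ∀ k, ‖a k‖ ≤ K * c ^ k) (t : ℝ) :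
    HasDerivAt (lacunaryExpSeries 0 a) (lacunaryExpSeries 1 (fun k => a (k + 1)) t) t := by
  have ha' : ∀ k, ‖a (k + 1)‖ ≤ K * c * c ^ k := fun k => (ha (k + 1)).trans_eq (by ring)
  rw [lacunaryExpSeries_zero_eq_add ha]
  exact (hasDerivAt_lacunaryExpSeries_succ ha' 1 t).const_add (a 0)

theorem ContinuousLinearMap.map_lacunaryExpSeries (ha : ∀ k, ‖a k‖ ≤ K * c ^ k)
    (L : V →L[ℝ] V) (m : ℕ) (t : ℝ) :
    L (lacunaryExpSeries m a t) = lacunaryExpSeries m (fun k => L (a k)) t := by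
  simp only [lacunaryExpSeries, L.map_tsum (summable_lacunaryExpSeries ha m t), map_smul]

end lacunaryExpSeries

theorem Matrix.hasDerivAt_lacunaryExpSeries_pow {ι : Type*} [Fintype ι] [DecidableEq ι]
    (E : Matrix ι ι ℝ) (t : ℝ) :
    HasDerivAt (lacunaryExpSeries 0 (E ^ ·)) (E * lacunaryExpSeries 1 (E ^ ·) t) t := by
  have hE := E.norm_pow_le_card_mul
  refine (hasDerivAt_lacunaryExpSeries_zero hE t).congr_deriv ?_
  calc lacunaryExpSeries 1 (fun k => E ^ (k + 1)) t
      = lacunaryExpSeries 1 (fun k => E * E ^ k) t := by simp only [pow_succ']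
    _ = E * lacunaryExpSeries 1 (E ^ ·) t :=
      ((LinearMap.mulLeft ℝ E).toContinuousLinearMap.map_lacunaryExpSeries hE 1 t).symm

theorem fundamental_matrix_of_reflection_system_general
    (n : ℕ) (A B F G : Matrix (Fin n) (Fin n) ℝ)
    (hFGm : IsUnit (F - G)) (hFGp : IsUnit (F + G)) :
    let Mp := (F + G)⁻¹ * (A + B)
    let E := ((F - G)⁻¹ * (A - B)) * Mp
    let X : ℝ → Matrix (Fin n) (Fin n) ℝ := fun t =>
      (∑' k : ℕ, (t ^ (2 * k) / (Nat.factorial (2 * k)) : ℝ) • E ^ k)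
        - Mp * ∑' k : ℕ, (t ^ (2 * k + 1) / (Nat.factorial (2 * k + 1)) : ℝ) • E ^ k
    Differentiable ℝ X ∧ X 0 = 1 ∧
      ∀ t : ℝ, F * deriv X t + G * deriv X (-t) + A * X t + B * X (-t) = 0 := by
  intro Mp E X
  set C := lacunaryExpSeries 0 (E ^ ·)
  set S := lacunaryExpSeries 1 (E ^ ·)
  have hX : X = fun t => C t - Mp * S t := rfl
  have hX_hasDeriv (t : ℝ) : HasDerivAt X (E * S t - Mp * C t) t :=
    (E.hasDerivAt_lacunaryExpSeries_pow t).sub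
      ((LinearMap.mulLeft ℝ Mp).toContinuousLinearMap.hasFDerivAt.comp_hasDerivAt t
        (hasDerivAt_lacunaryExpSeries_succ E.norm_pow_le_card_mul 0 t))
  have hX_deriv (t : ℝ) : deriv X t = E * S t - Mp * C t := (hX_hasDeriv t).deriv
  refine ⟨fun t => (hX_hasDeriv t).differentiableAt, ?_, fun t => ?_⟩
  · simp [hX, C, S, lacunaryExpSeries_zero_apply_zero, lacunaryExpSeries_succ_apply_zero]
  have hM : (F - G) * E = (A - B) * Mp := by
    rw [← Matrix.mul_assoc, Matrix.mul_nonsing_inv_cancel_left _ _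
      ((Matrix.isUnit_iff_isUnit_det _).mp hFGm)]
  have hP : (F + G) * Mp = A + B :=
    Matrix.mul_nonsing_inv_cancel_left _ _ ((Matrix.isUnit_iff_isUnit_det _).mp hFGp)
  rw [hX_deriv, hX_deriv, hX]
  simp only [C, S, lacunaryExpSeries_neg, pow_zero, pow_one, one_smul, neg_one_smul]
  calc _ = ((F - G) * E - (A - B) * Mp) * S t + ((A + B) - (F + G) * Mp) * C t := by
        noncomm_ring
    _ = 0 := by rw [hM, hP]; simp

/-- For `n ≥ 1` and real `n×n` matrices `A, B, F, G` with `F - G` and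
`F + G` invertible, setting `M₊ = (F+G)⁻¹(A+B)`, `M₋ = (F-G)⁻¹(A-B)`, `E = M₋M₊`, the
matrix function `X(t) = Σ E^k t^(2k)/(2k)! - M₊ Σ E^k t^(2k+1)/(2k+1)!` is differentiable,
satisfies `X(0) = I` and the differential equation with reflection
`F X'(t) + G X'(-t) + A X(t) + B X(-t) = 0`. -/
theorem fundamental_matrix_of_reflection_system
    (n : ℕ) (hn : 1 ≤ n) (A B F G : Matrix (Fin n) (Fin n) ℝ)
    (hFGm : IsUnit (F - G)) (hFGp : IsUnit (F + G)) :
    let Mp := (F + G)⁻¹ * (A + B)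
    let E := ((F - G)⁻¹ * (A - B)) * Mp
    let X : ℝ → Matrix (Fin n) (Fin n) ℝ := fun t =>
      (∑' k : ℕ, (t ^ (2 * k) / (Nat.factorial (2 * k)) : ℝ) • E ^ k)
        - Mp * ∑' k : ℕ, (t ^ (2 * k + 1) / (Nat.factorial (2 * k + 1)) : ℝ) • E ^ k
    Differentiable ℝ X ∧ X 0 = 1 ∧
      ∀ t : ℝ, F * deriv X t + G * deriv X (-t) + A * X t + B * X (-t) = 0 :=
  fundamental_matrix_of_reflection_system_general n A B F G hFGm hFGp
end

section
/- Let E and M₊ be n×n real matrices and define S₁(t) = Σ_{k=0}^∞ E^k t^{2k}/(2k)! and S₂(t) = Σ_{k=0}^∞ E^k t^{2k+1}/(2k+1)!. Then for every t ∈ ℝ the identity (S₁(t) − M₊·S₂(t))·(E·S₂(t) − S₁(t)·M₊) = (E·S₂(t) − M₊·S₁(t))·(S₁(t) − S₂(t)·M₊) holds. Consequently, whenever X(t) = S₁(t) − M₊·S₂(t) and S₁(t) − S₂(t)·M₊ are both invertible, X(t)⁻¹·X′(t) = (E·S₂(t) − S₁(t)·M₊)·(S₁(t) − S₂(t)·M₊)⁻¹.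 -/
/-!
`S₁(t)` and `S₂(t)` are `cosh (t √E)` and `sinh (t √E) / √E`. No square root of `E` is needed to
see this: they are the blocks of `exp (t J)` for `J = !![0, 1; E, 0]`, whose square is `E` on the
diagonal. Reading off the top-left block of `exp (t J) * exp (-t J) = 1` gives `S₁² = 1 + E S₂²`.
Since `S₁`, `S₂` and `E` commute, the claimed identity is then a short ring computation, and the
formula for `X⁻¹ X'` follows by moving the inverses across.
-/

open NormedSpace
open scoped Nat

theorem Matrix.hasSum_fin_two {ι α : Type*} [AddCommMonoid α] [TopologicalSpace α]
    {f₁₁ f₁₂ f₂₁ f₂₂ : ι → α} {a₁₁ a₁₂ a₂₁ a₂₂ : α} (h₁₁ : HasSum f₁₁ a₁₁)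
    (h₁₂ : HasSum f₁₂ a₁₂) (h₂₁ : HasSum f₂₁ a₂₁) (h₂₂ : HasSum f₂₂ a₂₂) :
    HasSum (fun i => !![f₁₁ i, f₁₂ i; f₂₁ i, f₂₂ i]) !![a₁₁, a₁₂; a₂₁, a₂₂] :=
  Pi.hasSum.2 fun i => Pi.hasSum.2 fun j => by
    fin_cases i <;> fin_cases j <;> assumption

theorem summable_pow_div_factorial_two_mul_add {x : ℝ} (hx : 0 ≤ x) (j : ℕ) :
    Summable fun k : ℕ => x ^ k / (2 * k + j)! := by
  refine (Real.summable_pow_div_factorial x).of_nonneg_of_le (fun k => by positivity) fun k => ?_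
  gcongr
  omega

theorem sub_mul_sub_eq_sub_mul_sub_of_commute {R : Type*} [Ring R] {c s q m : R} (hcs : Commute c s)
    (hcq : Commute c q) (hsq : Commute s q) (hc : c * c = 1 + s * q) :
    (c - m * s) * (q - c * m) = (q - m * c) * (c - s * m) :=
  calc (c - m * s) * (q - c * m) = c * q - c * c * m - m * (s * q) + m * (s * c) * m := by
        noncomm_ring
    _ = q * c - q * s * m - m * (c * c) + m * (c * s) * m := by
        rw [hc, hcq.eq, hcs.eq, hsq.eq]
        noncomm_ring
    _ = (q - m * c) * (c - s * m) := by noncomm_ring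

theorem Matrix.inv_mul_eq_mul_inv_of_mul_eq_mul {n α : Type*} [Fintype n] [DecidableEq n]
    [CommRing α] {X Y Z W : Matrix n n α} (hX : IsUnit X) (hY : IsUnit Y) (h : X * Z = W * Y) :
    X⁻¹ * W = Z * Y⁻¹ := by
  let _ := hX.invertible
  let _ := hY.invertible
  rw [inv_mul_eq_iff_eq_mul_of_invertible, ← Matrix.mul_assoc, h,
    mul_inv_cancel_right_of_invertible]

section BanachAlgebra

variable {𝕂 A : Type*} [RCLike 𝕂] [NormedRing A] [NormedAlgebra 𝕂 A]

theorem summable_norm_smul_pow {a : ℕ → 𝕂} {e : A}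
    (h : Summable fun k => ‖a k‖ * ‖e‖ ^ k) : Summable fun k => ‖a k • e ^ k‖ := by
  -- shift past `k = 0`, where `‖e ^ 0‖ = ‖1‖` may exceed `‖e‖ ^ 0 = 1`
  refine (summable_nat_add_iff 1).mp <| ((summable_nat_add_iff 1).mpr h).of_nonneg_of_le
    (fun _ => norm_nonneg _) fun k => (norm_smul_le _ _).trans ?_
  gcongr
  exact norm_pow_le' e k.succ_pos

noncomputable def coshSqrt (e : A) (t : 𝕂) : A :=
  ∑' k : ℕ, (t ^ (2 * k) / (2 * k)! : 𝕂) • e ^ k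

noncomputable def sinhSqrtDiv (e : A) (t : 𝕂) : A :=
  ∑' k : ℕ, (t ^ (2 * k + 1) / (2 * k + 1)! : 𝕂) • e ^ k

theorem coshSqrt_neg (e : A) (t : 𝕂) : coshSqrt e (-t) = coshSqrt e t := by
  simp [coshSqrt, pow_mul]

theorem sinhSqrtDiv_neg (e : A) (t : 𝕂) : sinhSqrtDiv e (-t) = -sinhSqrtDiv e t := by
  simp [sinhSqrtDiv, pow_succ, pow_mul, neg_div, tsum_neg]

theorem commute_coshSqrt_sinhSqrtDiv (e : A) (t : 𝕂) :
    Commute (coshSqrt e t) (sinhSqrtDiv e t) :=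
  Commute.tsum_left _ fun i => Commute.tsum_right _ fun j =>
    ((Commute.pow_pow_self e i j).smul_left _).smul_right _

theorem commute_self_coshSqrt (e : A) (t : 𝕂) : Commute e (coshSqrt e t) :=
  Commute.tsum_right _ fun k => (Commute.self_pow e k).smul_right _

theorem commute_self_sinhSqrtDiv (e : A) (t : 𝕂) : Commute e (sinhSqrtDiv e t) :=
  Commute.tsum_right _ fun k => (Commute.self_pow e k).smul_right _

def secondOrderCompanion (e : A) : Matrix (Fin 2) (Fin 2) A := !![0, 1; e, 0]

theorem secondOrderCompanion_pow_two_mul (e : A) (k : ℕ) :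
    secondOrderCompanion e ^ (2 * k) = !![e ^ k, 0; 0, e ^ k] := by
  induction k with
  | zero => simp [Matrix.one_fin_two]
  | succ k ih =>
    rw [Nat.mul_succ, pow_add, ih, sq, secondOrderCompanion]
    simp [pow_succ]

theorem secondOrderCompanion_pow_two_mul_add_one (e : A) (k : ℕ) :
    secondOrderCompanion e ^ (2 * k + 1) = !![0, e ^ k; e ^ (k + 1), 0] := by
  rw [pow_succ, secondOrderCompanion_pow_two_mul, secondOrderCompanion]
  simp [pow_succ]

variable [CompleteSpace A]

theorem hasSum_coshSqrt (e : A) (t : 𝕂) :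
    HasSum (fun k : ℕ => (t ^ (2 * k) / (2 * k)! : 𝕂) • e ^ k) (coshSqrt e t) := by
  have h : Summable fun k : ℕ => ‖(t ^ (2 * k) / (2 * k)! : 𝕂) • e ^ k‖ :=
    summable_norm_smul_pow <| (summable_pow_div_factorial_two_mul_add
      (by positivity : 0 ≤ ‖t‖ ^ 2 * ‖e‖) 0).congr fun k => by
        simp [norm_div, mul_pow, pow_mul, div_mul_eq_mul_div]
  exact h.of_norm.hasSum

theorem hasSum_sinhSqrtDiv (e : A) (t : 𝕂) :
    HasSum (fun k : ℕ => (t ^ (2 * k + 1) / (2 * k + 1)! : 𝕂) • e ^ k) (sinhSqrtDiv e t) := by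
  have h : Summable fun k : ℕ => ‖(t ^ (2 * k + 1) / (2 * k + 1)! : 𝕂) • e ^ k‖ :=
    summable_norm_smul_pow <| ((summable_pow_div_factorial_two_mul_add
      (by positivity : 0 ≤ ‖t‖ ^ 2 * ‖e‖) 1).mul_left ‖t‖).congr fun k => by
        simp [norm_div, mul_pow, pow_succ, pow_mul]
        ring
  exact h.of_norm.hasSum

theorem exp_smul_secondOrderCompanion (e : A) (t : 𝕂) :
    exp (t • secondOrderCompanion e) =
      !![coshSqrt e t, sinhSqrtDiv e t; e * sinhSqrtDiv e t, coshSqrt e t] := by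
  have hC := hasSum_coshSqrt e t
  have hS := hasSum_sinhSqrtDiv e t
  have heven := Matrix.hasSum_fin_two hC hasSum_zero hasSum_zero hC
  have hodd := Matrix.hasSum_fin_two hasSum_zero hS (hS.mul_left e) hasSum_zero
  have key : HasSum (fun n => (n !⁻¹ : 𝕂) • (t • secondOrderCompanion e) ^ n)
      (!![coshSqrt e t, 0; 0, coshSqrt e t] + !![0, sinhSqrtDiv e t; e * sinhSqrtDiv e t, 0]) := by
    refine HasSum.even_add_odd ?_ ?_
    · convert heven using 2 with k
      rw [smul_pow, secondOrderCompanion_pow_two_mul, smul_smul]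
      simp [div_eq_inv_mul]
    · convert hodd using 2 with k
      rw [smul_pow, secondOrderCompanion_pow_two_mul_add_one, smul_smul]
      simp [div_eq_inv_mul, pow_succ']
  rw [exp_eq_tsum 𝕂]
  exact key.tsum_eq.trans (by simp)

theorem coshSqrt_mul_self (e : A) (t : 𝕂) :
    coshSqrt e t * coshSqrt e t = 1 + sinhSqrtDiv e t * (e * sinhSqrtDiv e t) := by
  let _ : NormedAlgebra ℚ A := NormedAlgebra.restrictScalars ℚ 𝕂 A
  have h := Matrix.exp_add_of_commute (t • secondOrderCompanion e) ((-t) • secondOrderCompanion e)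
    (((Commute.refl _).smul_left _).smul_right _)
  rw [← add_smul, add_neg_cancel, zero_smul, exp_zero, exp_smul_secondOrderCompanion,
    exp_smul_secondOrderCompanion, coshSqrt_neg, sinhSqrtDiv_neg, Matrix.one_fin_two,
    Matrix.mul_fin_two] at h
  have h₀₀ : 1 = coshSqrt e t * coshSqrt e t + sinhSqrtDiv e t * (e * -sinhSqrtDiv e t) :=
    congrFun (congrFun h 0) 0
  rw [h₀₀, mul_neg, mul_neg]
  abel

theorem coshSqrt_sub_mul_sinhSqrtDiv_mul (e m : A) (t : 𝕂) :
    (coshSqrt e t - m * sinhSqrtDiv e t) * (e * sinhSqrtDiv e t - coshSqrt e t * m) =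
      (e * sinhSqrtDiv e t - m * coshSqrt e t) * (coshSqrt e t - sinhSqrtDiv e t * m) :=
  sub_mul_sub_eq_sub_mul_sub_of_commute (commute_coshSqrt_sinhSqrtDiv e t)
    ((commute_self_coshSqrt e t).symm.mul_right (commute_coshSqrt_sinhSqrtDiv e t))
    ((commute_self_sinhSqrtDiv e t).symm.mul_right (Commute.refl _)) (coshSqrt_mul_self e t)

end BanachAlgebra

/-- For `n×n` real matrices `E` and `M₊` and the matrix series
`S₁(t) = Σ E^k t^(2k)/(2k)!`, `S₂(t) = Σ E^k t^(2k+1)/(2k+1)!`, one has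
`(S₁ - M₊S₂)(E S₂ - S₁ M₊) = (E S₂ - M₊ S₁)(S₁ - S₂ M₊)`; consequently, whenever
`X = S₁ - M₊ S₂` and `S₁ - S₂ M₊` are invertible,
`X⁻¹ X' = (E S₂ - S₁ M₊)(S₁ - S₂ M₊)⁻¹`, where `X' = E S₂ - M₊ S₁`. -/
theorem riccati_solution_commutation
    (n : ℕ) (E Mp : Matrix (Fin n) (Fin n) ℝ) (t : ℝ) :
    let S₁ := ∑' k : ℕ, (t ^ (2 * k) / (Nat.factorial (2 * k)) : ℝ) • E ^ k
    let S₂ := ∑' k : ℕ, (t ^ (2 * k + 1) / (Nat.factorial (2 * k + 1)) : ℝ) • E ^ k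
    (S₁ - Mp * S₂) * (E * S₂ - S₁ * Mp) = (E * S₂ - Mp * S₁) * (S₁ - S₂ * Mp) ∧
    (IsUnit (S₁ - Mp * S₂) → IsUnit (S₁ - S₂ * Mp) →
      (S₁ - Mp * S₂)⁻¹ * (E * S₂ - Mp * S₁)
        = (E * S₂ - S₁ * Mp) * (S₁ - S₂ * Mp)⁻¹) := by
  intro S₁ S₂
  let _ : NormedRing (Matrix (Fin n) (Fin n) ℝ) := Matrix.linftyOpNormedRing
  let _ : NormedAlgebra ℝ (Matrix (Fin n) (Fin n) ℝ) := Matrix.linftyOpNormedAlgebra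
  have hid : (S₁ - Mp * S₂) * (E * S₂ - S₁ * Mp) = (E * S₂ - Mp * S₁) * (S₁ - S₂ * Mp) :=
    coshSqrt_sub_mul_sinhSqrtDiv_mul E Mp t
  exact ⟨hid, fun hX hY => Matrix.inv_mul_eq_mul_inv_of_mul_eq_mul hX hY hid⟩
end

section
/- Let A, B be n×n complex matrices with B invertible, and let X, Y : ℝ → Mₙ(ℂ) be differentiable functions satisfying the coupled system X′ + A·X + conj(B)·Y = 0 and Y′ + conj(A)·Y + B·X = 0, with F = A + conj(B·A·B⁻¹) and G = conj(B·A·B⁻¹)·A − conj(B)·B. Then Y is twice differentiable and satisfies Y″ + conj(F)·Y′ + conj(G)·Y = 0. -/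
/-!
Differentiating `Y' = -(conj(A) Y + B X)` once more gives `Y'' = -(conj(A) Y' + B X')`.
Substituting `X'` from the first equation leaves the term `B A X = B A B⁻¹ (B X)`, and
`B X = -(Y' + conj(A) Y)` by the second equation, so `X` drops out. Since entrywise conjugation
is an involutive ring homomorphism, `conj(F) = conj(A) + B A B⁻¹` and
`conj(G) = B A B⁻¹ conj(A) - B conj(B)`, which are exactly the coefficients produced.
-/

open Matrix

attribute [local instance] Matrix.normedAddCommGroup Matrix.normedSpace

theorem HasDerivAt.matrix_const_mul {𝕜 α n : Type*} [NontriviallyNormedField 𝕜] [NormedRing α]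
    [NormedAlgebra 𝕜 α] [Fintype n] (M : Matrix n n α) {f : 𝕜 → Matrix n n α}
    {f' : Matrix n n α} {t : 𝕜} (hf : HasDerivAt f f' t) :
    HasDerivAt (fun s => M * f s) (M * f') t :=
  let L : Matrix n n α →L[𝕜] Matrix n n α :=
    ⟨LinearMap.mulLeft 𝕜 M, continuous_const.matrix_mul continuous_id⟩
  L.hasFDerivAt.comp_hasDerivAt t hf

theorem hasDerivAt_deriv_of_linear_ode {𝕜 α n : Type*} [NontriviallyNormedField 𝕜]
    [NormedRing α] [NormedAlgebra 𝕜 α] [Fintype n] {P Q : Matrix n n α}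
    {f g : 𝕜 → Matrix n n α} (hf : Differentiable 𝕜 f) (hg : Differentiable 𝕜 g)
    (h : ∀ t, deriv f t + P * f t + Q * g t = 0) (t : 𝕜) :
    HasDerivAt (deriv f) (-(P * deriv f t + Q * deriv g t)) t := by
  have hderiv : deriv f = fun s => -(P * f s + Q * g s) :=
    funext fun s => eq_neg_of_add_eq_zero_left <| (add_assoc _ _ _).symm.trans (h s)
  exact (((hf t).hasDerivAt.matrix_const_mul P).add
    ((hg t).hasDerivAt.matrix_const_mul Q)).neg.congr_of_eventuallyEq
    (.of_forall fun s => congrFun hderiv s)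

theorem second_order_of_coupled_first_order {R : Type*} [Ring R]
    {a a' b b' binv x y x' y' y'' : R} (hb : binv * b = 1)
    (hy' : y' + a' * y + b * x = 0) (hx' : x' + a * x + b' * y = 0)
    (hy'' : y'' + a' * y' + b * x' = 0) :
    y'' + (a' + b * a * binv) * y' + (b * a * binv * a' - b * b') * y = 0 := by
  linear_combination (norm := noncomm_ring)
    hy'' - b * hx' + b * a * binv * hy' - b * a * hb * x

/-- If `X, Y : ℝ → Mₙ(ℂ)` are differentiable and solve the coupled system
`X' + A X + conj(B) Y = 0`, `Y' + conj(A) Y + B X = 0` with `B` invertible, and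
`F = A + conj(BAB⁻¹)`, `G = conj(BAB⁻¹) A - conj(B) B`, then `Y` is twice differentiable
and satisfies `Y'' + conj(F) Y' + conj(G) Y = 0`. -/
theorem second_order_reduction_Y
    (n : ℕ) (A B : Matrix (Fin n) (Fin n) ℂ) (hB : IsUnit B)
    (X Y : ℝ → Matrix (Fin n) (Fin n) ℂ)
    (hX : Differentiable ℝ X) (hY : Differentiable ℝ Y)
    (h1 : ∀ t : ℝ, deriv X t + A * X t + B.map (starRingEnd ℂ) * Y t = 0)
    (h2 : ∀ t : ℝ, deriv Y t + A.map (starRingEnd ℂ) * Y t + B * X t = 0) :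
    let F := A + (B * A * B⁻¹).map (starRingEnd ℂ)
    let G := (B * A * B⁻¹).map (starRingEnd ℂ) * A - B.map (starRingEnd ℂ) * B
    Differentiable ℝ (deriv Y) ∧
    ∀ t : ℝ, deriv (deriv Y) t
        + F.map (starRingEnd ℂ) * deriv Y t
        + G.map (starRingEnd ℂ) * Y t = 0 := by
  intro F G
  have hY'' := hasDerivAt_deriv_of_linear_ode hY hX h2
  refine ⟨fun t => (hY'' t).differentiableAt, fun t => ?_⟩
  have hF : F.map (starRingEnd ℂ) = A.map (starRingEnd ℂ) + B * A * B⁻¹ := by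
    simp [F, Matrix.map_add, Matrix.map_map, Function.comp_def]
  have hG : G.map (starRingEnd ℂ) =
      B * A * B⁻¹ * A.map (starRingEnd ℂ) - B * B.map (starRingEnd ℂ) := by
    simp [G, Matrix.map_sub, Matrix.map_mul, Matrix.map_map, Function.comp_def]
  rw [hF, hG]
  refine second_order_of_coupled_first_order
    (nonsing_inv_mul B ((isUnit_iff_isUnit_det B).mp hB)) (h2 t) (h1 t) ?_
  rw [add_assoc, ← eq_neg_iff_add_eq_zero]
  exact (hY'' t).deriv
end

section
/- Let A, B₁, …, B_N be n×n matrices over a field with A invertible. Then for all nonnegative integers l, m₁, …, m_N, the duality relation Z_{l,m₁,…,m_N}(A, B₁,…,B_N) = det(A) · Z_{n−l−Σᵢmᵢ, m₁,…,m_N}(A⁻¹, A⁻¹B₁, …, A⁻¹B_N) holds (where by convention an invariant with a negative first index is zero). -/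
/-!
Factor `1 + α₀ A + Σ αᵢ Bᵢ = A (α₀ + W)` with `W = A⁻¹ + Σ αᵢ A⁻¹ Bᵢ`: the left-hand invariant
is `det A` times the coefficient of `α₀^l α^m` in the characteristic polynomial of `-W` over
`K[α₁, …, α_N]`. Reversing the characteristic polynomial turns this into the coefficient of
`t^(n-l) α^m` in `det (1 + t W)`. As `W` is affine in the `αᵢ`, `det (1 + t W)` arises from
`det (1 + t A⁻¹ + Σ αᵢ A⁻¹ Bᵢ)` by the substitution `αᵢ ↦ t αᵢ`, which raises the `t`-degree of
the coefficient of `α^m` by `|m|`.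
-/

open Matrix

/-- The generalized matrix invariant `Z_{m₁,…,m_N}(X₁,…,X_N)`: the coefficient of the
monomial `α₁^{m₁} ⋯ α_N^{m_N}` in the polynomial `det(I + Σᵢ αᵢ Xᵢ)`. -/
noncomputable def genZ {R : Type*} [CommRing R] {n N : ℕ}
    (Xs : Fin N → Matrix (Fin n) (Fin n) R) (m : Fin N → ℕ) : R :=
  MvPolynomial.coeff (Finsupp.equivFunOnFinite.symm m)
    (Matrix.det (1 + ∑ i : Fin N,
      (MvPolynomial.X i : MvPolynomial (Fin N) R) • (Xs i).map MvPolynomial.C))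

open Polynomial

theorem Finsupp.equivFunOnFinite_symm_cons {N : ℕ} (l : ℕ) (m : Fin N → ℕ) :
    Finsupp.equivFunOnFinite.symm (Fin.cons l m : Fin (N + 1) → ℕ)
      = Finsupp.cons l (Finsupp.equivFunOnFinite.symm m) := by
  ext i
  cases i using Fin.cases <;> simp

section Pencil

variable {R : Type*} [CommRing R] {ι : Type*} {N : ℕ}

noncomputable def pencil (Xs : Fin N → Matrix ι ι R) : Matrix ι ι (MvPolynomial (Fin N) R) :=
  ∑ i, (MvPolynomial.X i : MvPolynomial (Fin N) R) • (Xs i).map MvPolynomial.C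

/-- `det (1 + t X₀ + Σ αᵢ Xᵢ)` as a polynomial in `t` over `R[α₁, …, α_N]`. -/
noncomputable def detPencil [Fintype ι] [DecidableEq ι] (X₀ : Matrix ι ι R)
    (Xs : Fin N → Matrix ι ι R) : (MvPolynomial (Fin N) R)[X] :=
  det (1 + (X : (MvPolynomial (Fin N) R)[X]) • (X₀.map MvPolynomial.C).map C + (pencil Xs).map C)

theorem map_C_mul_pencil [Fintype ι] (A : Matrix ι ι R) (Xs : Fin N → Matrix ι ι R) :
    A.map MvPolynomial.C * pencil Xs = pencil fun i => A * Xs i := by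
  simp only [pencil, Finset.mul_sum, Matrix.mul_smul, Matrix.map_mul]

theorem pencil_cons_map_finSuccEquiv (X₀ : Matrix ι ι R) (Xs : Fin N → Matrix ι ι R) :
    (pencil (Fin.cons X₀ Xs)).map (MvPolynomial.finSuccEquiv R N)
      = (X : (MvPolynomial (Fin N) R)[X]) • (X₀.map MvPolynomial.C).map C + (pencil Xs).map C := by
  ext i j
  simp [pencil, Fin.sum_univ_succ, Matrix.sum_apply, MvPolynomial.finSuccEquiv_apply]

end Pencil

theorem genZ_cons {R : Type*} [CommRing R] {n N : ℕ} (X₀ : Matrix (Fin n) (Fin n) R)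
    (Xs : Fin N → Matrix (Fin n) (Fin n) R) (l : ℕ) (m : Fin N → ℕ) :
    genZ (Fin.cons X₀ Xs) (Fin.cons l m)
      = ((detPencil X₀ Xs).coeff l).coeff (Finsupp.equivFunOnFinite.symm m) := by
  rw [genZ, Finsupp.equivFunOnFinite_symm_cons, ← MvPolynomial.finSuccEquiv_coeff_coeff,
    detPencil, add_assoc, ← pencil_cons_map_finSuccEquiv]
  congr 2
  rw [← pencil, AlgEquiv.map_det, AlgEquiv.mapMatrix_apply, Matrix.map_add, Matrix.map_one] <;> simp

section Charpoly

variable {S : Type*} [CommRing S] {ι : Type*} [Fintype ι] [DecidableEq ι]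

theorem det_one_add_X_smul_add_eq_C_mul_charpoly {A B : Matrix ι ι S} (hAB : A * B = 1)
    (M : Matrix ι ι S) :
    det (1 + (X : S[X]) • A.map C + M.map C) = C A.det * (-(B * (1 + M))).charpoly := by
  let φ : Matrix ι ι S →+* Matrix ι ι S[X] := (C : S →+* S[X]).mapMatrix
  have hfactor : 1 + (X : S[X]) • φ A + φ M = φ A * ((X : S[X]) • 1 - φ (-(B * (1 + M)))) := by
    rw [map_neg, sub_neg_eq_add, map_mul, mul_add, ← mul_assoc, ← map_mul, hAB, map_add, map_one,
      one_mul, Matrix.mul_smul, mul_one]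
    abel
  change det (1 + (X : S[X]) • φ A + φ M) = _
  rw [hfactor, det_mul, smul_one_eq_diagonal, ← RingHom.map_det]
  rfl

theorem charpoly_coeff_eq_charpolyRev_coeff [Nontrivial S] (M : Matrix ι ι S) (l : ℕ) :
    M.charpoly.coeff l
      = if l ≤ Fintype.card ι then M.charpolyRev.coeff (Fintype.card ι - l) else 0 := by
  split_ifs with hl
  · rw [← reverse_charpoly, coeff_reverse, charpoly_natDegree_eq_dim, revAt_le (Nat.sub_le _ _),
      Nat.sub_sub_self hl]
  · exact coeff_eq_zero_of_natDegree_lt (by rw [charpoly_natDegree_eq_dim]; omega)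

end Charpoly

section ScaleVars

variable (σ R : Type*) [CommRing R]

noncomputable def scaleVars : (MvPolynomial σ R)[X] →+* (MvPolynomial σ R)[X] :=
  eval₂RingHom (MvPolynomial.eval₂Hom (C.comp MvPolynomial.C) fun i => X * C (MvPolynomial.X i)) X

variable {σ R}

@[simp] theorem scaleVars_X : scaleVars σ R X = X := eval₂_X _ _

@[simp] theorem scaleVars_C_C (a : R) :
    scaleVars σ R (C (MvPolynomial.C a)) = C (MvPolynomial.C a) := by
  simp [scaleVars]

@[simp] theorem scaleVars_C_X (i : σ) :
    scaleVars σ R (C (MvPolynomial.X i)) = X * C (MvPolynomial.X i) := by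
  simp [scaleVars]

theorem scaleVars_monomial (k : ℕ) (μ : σ →₀ ℕ) (c : R) :
    scaleVars σ R (monomial k (MvPolynomial.monomial μ c))
      = monomial (k + μ.degree) (MvPolynomial.monomial μ c) := by
  rw [← C_mul_X_pow_eq_monomial, map_mul, map_pow, scaleVars_X, scaleVars, coe_eval₂RingHom,
    eval₂_C, MvPolynomial.coe_eval₂Hom, MvPolynomial.eval₂_monomial, ← C_mul_X_pow_eq_monomial,
    MvPolynomial.monomial_eq, Finsupp.degree_apply]
  simp only [Finsupp.prod, mul_pow, Finset.prod_mul_distrib, Finset.prod_pow_eq_pow_sum, ← C_pow,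
    ← map_prod, RingHom.coe_comp, Function.comp_apply, map_mul]
  ring

theorem coeff_coeff_scaleVars (q : (MvPolynomial σ R)[X]) (j : ℕ) (μ : σ →₀ ℕ) :
    ((scaleVars σ R q).coeff j).coeff μ
      = if μ.degree ≤ j then (q.coeff (j - μ.degree)).coeff μ else 0 := by
  classical
  induction q using Polynomial.induction_on' with
  | add p q hp hq =>
    simp only [map_add, coeff_add, MvPolynomial.coeff_add, hp, hq]
    split_ifs <;> simp
  | monomial k r =>
    induction r using MvPolynomial.induction_on' with
    | monomial ν c =>
      rw [scaleVars_monomial]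
      by_cases hν : ν = μ
      · subst hν
        simp only [coeff_monomial]
        split_ifs <;> first | rfl | omega
      · simp only [coeff_monomial, apply_ite (MvPolynomial.coeff μ), MvPolynomial.coeff_monomial,
          if_neg hν, MvPolynomial.coeff_zero, ite_self]
    | add p q hp hq =>
      simp only [map_add, coeff_add, MvPolynomial.coeff_add, hp, hq]
      split_ifs <;> simp

end ScaleVars

section Duality

variable {R : Type*} [CommRing R] {ι : Type*} [Fintype ι] [DecidableEq ι] {N : ℕ}

theorem scaleVars_detPencil (B : Matrix ι ι R) (Xs : Fin N → Matrix ι ι R) :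
    scaleVars (Fin N) R (detPencil B Xs)
      = det (1 + (X : (MvPolynomial (Fin N) R)[X]) • (B.map MvPolynomial.C + pencil Xs).map C) := by
  rw [detPencil, RingHom.map_det, RingHom.mapMatrix_apply]
  congr 1
  ext i j : 1
  simp only [Matrix.map_apply, Matrix.add_apply, Matrix.one_apply, Matrix.smul_apply, pencil,
    Matrix.sum_apply, smul_eq_mul, map_add, map_sum, map_mul, apply_ite (scaleVars (Fin N) R),
    map_one, map_zero, scaleVars_X, scaleVars_C_C, scaleVars_C_X, mul_add, Finset.mul_sum,
    ← mul_assoc, add_assoc]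

theorem coeff_coeff_charpoly_neg_pencil [Nontrivial R] (B : Matrix ι ι R)
    (Xs : Fin N → Matrix ι ι R) (l : ℕ) (μ : Fin N →₀ ℕ) :
    ((-(B.map MvPolynomial.C + pencil Xs)).charpoly.coeff l).coeff μ
      = if l + μ.degree ≤ Fintype.card ι then
          ((detPencil B Xs).coeff (Fintype.card ι - l - μ.degree)).coeff μ
        else 0 := by
  have hrev : (-(B.map MvPolynomial.C + pencil Xs)).charpolyRev
      = scaleVars (Fin N) R (detPencil B Xs) := by
    rw [scaleVars_detPencil, charpolyRev, Matrix.map_neg _ (map_neg C), smul_neg, sub_neg_eq_add]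
  rw [charpoly_coeff_eq_charpolyRev_coeff]
  split_ifs with hl hlμ hlμ
  · rw [hrev, coeff_coeff_scaleVars, if_pos (by omega), Nat.sub_right_comm]
  · rw [hrev, coeff_coeff_scaleVars, if_neg (by omega)]
  · omega
  · rw [MvPolynomial.coeff_zero]

end Duality

/-- duality. For an invertible matrix `A` over a field,
`Z_{l,m1,...,mN}(A,B1,...,BN) = det(A) * Z_{n-l-sum mi, m1,...,mN}(A^-1, A^-1 B1, ..., A^-1 BN)`,
with the convention that an invariant with negative first index is zero. -/
theorem genZ_duality
    {K : Type*} [Field K] {n N : ℕ}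
    (A : Matrix (Fin n) (Fin n) K) (hA : IsUnit A)
    (Bs : Fin N → Matrix (Fin n) (Fin n) K) (l : ℕ) (m : Fin N → ℕ) :
    genZ (Fin.cons A Bs) (Fin.cons l m)
      = if l + ∑ i : Fin N, m i ≤ n then
          A.det * genZ (Fin.cons A⁻¹ (fun i => A⁻¹ * Bs i))
            (Fin.cons (n - l - ∑ i : Fin N, m i) m)
        else 0 := by
  have hinv : A.map MvPolynomial.C * A⁻¹.map (MvPolynomial.C (σ := Fin N)) = 1 := by
    rw [← Matrix.map_mul, A.mul_nonsing_inv ((isUnit_iff_isUnit_det A).mp hA),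
      Matrix.map_one _ (map_zero _) (map_one _)]
  have hdet : det (A.map (MvPolynomial.C (σ := Fin N))) = MvPolynomial.C A.det :=
    (RingHom.map_det _ A).symm
  -- rewriting with `hdeg` rather than simplifying keeps the `Decidable` instance of the `if` in sync
  have hdeg : (Finsupp.equivFunOnFinite.symm m).degree = ∑ i, m i := by
    simp [Finsupp.degree_eq_sum]
  rw [genZ_cons, genZ_cons, detPencil, det_one_add_X_smul_add_eq_C_mul_charpoly hinv, mul_add,
    mul_one, map_C_mul_pencil, hdet, coeff_C_mul, MvPolynomial.coeff_C_mul,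
    coeff_coeff_charpoly_neg_pencil, Fintype.card_fin, hdeg, mul_ite, mul_zero]
end

section
/- Let E be a 2×2 real matrix and let X : ℝ → M₂(ℝ) be twice differentiable with X″(t) = X(t)·E for all t. Then det X and det X′ are twice differentiable and satisfy the closed linear system (det X)″ = 2·det X′ + det X · tr(E) and (det X′)″ = 2·det(E)·det X + det X′ · tr(E). -/
open Matrix

attribute [local instance] Matrix.normedAddCommGroup Matrix.normedSpace

noncomputable def entryCLM (i j : Fin 2) : Matrix (Fin 2) (Fin 2) ℝ →L[ℝ] ℝ :=
  LinearMap.toContinuousLinearMap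
    { toFun := fun M => M i j
      map_add' := fun _ _ => rfl
      map_smul' := fun _ _ => rfl }

theorem entry_hasDerivAt (X : ℝ → Matrix (Fin 2) (Fin 2) ℝ) (hX : Differentiable ℝ X)
    (i j : Fin 2) (t : ℝ) :
    HasDerivAt (fun s => X s i j) (deriv X t i j) t :=
  ((entryCLM i j).hasFDerivAt (x := X t)).comp_hasDerivAt t (hX t).hasDerivAt

/-- For a `2×2` real matrix `E` and a twice differentiable
`X : ℝ → M₂(ℝ)` with `X'' = X·E`, the functions `det X` and `det X'` are twice
differentiable and satisfy the closed linear system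
`(det X)'' = 2 det X' + det X · tr E` and `(det X')'' = 2 det E · det X + det X' · tr E`. -/
theorem closed_invariant_system_dim_two
    (E : Matrix (Fin 2) (Fin 2) ℝ) (X : ℝ → Matrix (Fin 2) (Fin 2) ℝ)
    (hX : Differentiable ℝ X) (hX' : Differentiable ℝ (deriv X))
    (hXE : ∀ t : ℝ, deriv (deriv X) t = X t * E) :
    let x : ℝ → ℝ := fun t => (X t).det
    let y : ℝ → ℝ := fun t => (deriv X t).det
    Differentiable ℝ x ∧ Differentiable ℝ (deriv x) ∧
    Differentiable ℝ y ∧ Differentiable ℝ (deriv y) ∧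
    (∀ t : ℝ, deriv (deriv x) t = 2 * y t + x t * E.trace) ∧
    (∀ t : ℝ, deriv (deriv y) t = 2 * E.det * x t + y t * E.trace) := by
  intro x y
  -- entry derivative facts
  have h1 : ∀ (i j : Fin 2) (t : ℝ),
      HasDerivAt (fun s => X s i j) (deriv X t i j) t := entry_hasDerivAt X hX
  have h2 : ∀ (i j : Fin 2) (t : ℝ),
      HasDerivAt (fun s => deriv X s i j) ((X t * E) i j) t := by
    intro i j t
    have := entry_hasDerivAt (deriv X) hX' i j t
    rwa [hXE t] at this
  have h3 : ∀ (i j : Fin 2) (t : ℝ),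
      HasDerivAt (fun s => (X s * E) i j) ((deriv X t * E) i j) t := by
    intro i j t
    have : HasDerivAt (fun s => X s i 0 * E 0 j + X s i 1 * E 1 j)
        (deriv X t i 0 * E 0 j + deriv X t i 1 * E 1 j) t :=
      ((h1 i 0 t).mul_const _).add ((h1 i 1 t).mul_const _)
    convert this using 2 <;> simp [Matrix.mul_apply, Fin.sum_univ_two]
  -- x and its first derivative
  have hx1 : ∀ t, HasDerivAt x
      (deriv X t 0 0 * X t 1 1 + X t 0 0 * deriv X t 1 1
        - (deriv X t 0 1 * X t 1 0 + X t 0 1 * deriv X t 1 0)) t := by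
    intro t
    have : HasDerivAt (fun s => X s 0 0 * X s 1 1 - X s 0 1 * X s 1 0)
        (deriv X t 0 0 * X t 1 1 + X t 0 0 * deriv X t 1 1
          - (deriv X t 0 1 * X t 1 0 + X t 0 1 * deriv X t 1 0)) t :=
      ((h1 0 0 t).mul (h1 1 1 t)).sub ((h1 0 1 t).mul (h1 1 0 t))
    convert this using 2
    simp only [x, Matrix.det_fin_two]
  have hdx : deriv x = fun t =>
      deriv X t 0 0 * X t 1 1 + X t 0 0 * deriv X t 1 1
        - (deriv X t 0 1 * X t 1 0 + X t 0 1 * deriv X t 1 0) :=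
    funext fun t => (hx1 t).deriv
  -- second derivative of x
  have hx2 : ∀ t, HasDerivAt (deriv x)
      (2 * y t + x t * E.trace) t := by
    intro t
    rw [hdx]
    have H : HasDerivAt (fun s =>
        deriv X s 0 0 * X s 1 1 + X s 0 0 * deriv X s 1 1
          - (deriv X s 0 1 * X s 1 0 + X s 0 1 * deriv X s 1 0))
        ((X t * E) 0 0 * X t 1 1 + deriv X t 0 0 * deriv X t 1 1
          + (deriv X t 0 0 * deriv X t 1 1 + X t 0 0 * (X t * E) 1 1)
          - ((X t * E) 0 1 * X t 1 0 + deriv X t 0 1 * deriv X t 1 0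
            + (deriv X t 0 1 * deriv X t 1 0 + X t 0 1 * (X t * E) 1 0))) t :=
      (((h2 0 0 t).mul (h1 1 1 t)).add ((h1 0 0 t).mul (h2 1 1 t))).sub
        (((h2 0 1 t).mul (h1 1 0 t)).add ((h1 0 1 t).mul (h2 1 0 t)))
    convert H using 1
    simp only [x, y, Matrix.det_fin_two, Matrix.trace_fin_two, Matrix.mul_apply,
      Fin.sum_univ_two]
    ring
  -- y and its first derivative
  have hy1 : ∀ t, HasDerivAt y
      ((X t * E) 0 0 * deriv X t 1 1 + deriv X t 0 0 * (X t * E) 1 1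
        - ((X t * E) 0 1 * deriv X t 1 0 + deriv X t 0 1 * (X t * E) 1 0)) t := by
    intro t
    have : HasDerivAt (fun s => deriv X s 0 0 * deriv X s 1 1 - deriv X s 0 1 * deriv X s 1 0)
        ((X t * E) 0 0 * deriv X t 1 1 + deriv X t 0 0 * (X t * E) 1 1
          - ((X t * E) 0 1 * deriv X t 1 0 + deriv X t 0 1 * (X t * E) 1 0)) t :=
      ((h2 0 0 t).mul (h2 1 1 t)).sub ((h2 0 1 t).mul (h2 1 0 t))
    convert this using 2
    simp only [y, Matrix.det_fin_two]
  have hdy : deriv y = fun t =>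
      (X t * E) 0 0 * deriv X t 1 1 + deriv X t 0 0 * (X t * E) 1 1
        - ((X t * E) 0 1 * deriv X t 1 0 + deriv X t 0 1 * (X t * E) 1 0) :=
    funext fun t => (hy1 t).deriv
  have hy2 : ∀ t, HasDerivAt (deriv y)
      (2 * E.det * x t + y t * E.trace) t := by
    intro t
    rw [hdy]
    have H : HasDerivAt (fun s =>
        (X s * E) 0 0 * deriv X s 1 1 + deriv X s 0 0 * (X s * E) 1 1
          - ((X s * E) 0 1 * deriv X s 1 0 + deriv X s 0 1 * (X s * E) 1 0))
        ((deriv X t * E) 0 0 * deriv X t 1 1 + (X t * E) 0 0 * (X t * E) 1 1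
          + ((X t * E) 0 0 * (X t * E) 1 1 + deriv X t 0 0 * (deriv X t * E) 1 1)
          - ((deriv X t * E) 0 1 * deriv X t 1 0 + (X t * E) 0 1 * (X t * E) 1 0
            + ((X t * E) 0 1 * (X t * E) 1 0 + deriv X t 0 1 * (deriv X t * E) 1 0))) t :=
      (((h3 0 0 t).mul (h2 1 1 t)).add ((h2 0 0 t).mul (h3 1 1 t))).sub
        (((h3 0 1 t).mul (h2 1 0 t)).add ((h2 0 1 t).mul (h3 1 0 t)))
    convert H using 1
    simp only [x, y, Matrix.det_fin_two, Matrix.trace_fin_two, Matrix.mul_apply,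
      Fin.sum_univ_two]
    ring
  refine ⟨fun t => (hx1 t).differentiableAt, fun t => (hx2 t).differentiableAt,
    fun t => (hy1 t).differentiableAt, fun t => (hy2 t).differentiableAt,
    fun t => (hx2 t).deriv, fun t => (hy2 t).deriv⟩
end
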